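/- arXiv:1611.07111 — 5 statements merged into one kernel-verified Lean document; each statement's English description precedes it below -/
import Mathlib

section
/- In any sequence of total acquisition moves on a graph G where each vertex starts with weight 1, a vertex v can never acquire weight exceeding 2^{deg(v)}. -/
/-- A total acquisition move: all the weight of `u` is moved to an adjacent
vertex `v`, provided `v` carries at least as much weight as `u`. -/
def AcqMove {V : Type*} [DecidableEq V] (G : SimpleGraph V) (w w' : V → ℕ) : Prop :=
  ∃ u v, G.Adj u v ∧ 0 < w u ∧ w u ≤ w v ∧
    w' = Function.update (Function.update w v (w v + w u)) u 0

/-- Reachability by a finite sequence of total acquisition moves. -/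
def AcqReach {V : Type*} [DecidableEq V] (G : SimpleGraph V) : (V → ℕ) → (V → ℕ) → Prop :=
  Relation.ReflTransGen (AcqMove G)

/-- No total acquisition move is available from `w`. -/
def AcqMaximal {V : Type*} [DecidableEq V] (G : SimpleGraph V) (w : V → ℕ) : Prop :=
  ∀ w', ¬ AcqMove G w w'

/-- The total acquisition number: minimum number of vertices with positive
weight after a maximal sequence of total acquisition moves starting from the
all-ones weight function. -/
noncomputable def totalAcq {V : Type*} [DecidableEq V] (G : SimpleGraph V) : ℕ :=
  sInf { m | ∃ w, AcqReach G (fun _ => 1) w ∧ AcqMaximal G w ∧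
    m = {v | 0 < w v}.ncard }

/-- Key invariant: each vertex's weight is bounded by `2 ^ (number of its
zero-weight neighbors)`. -/
lemma acq_invariant {V : Type*} [Fintype V] [DecidableEq V]
    (G : SimpleGraph V) [DecidableRel G.Adj] (w : V → ℕ)
    (hw : AcqReach G (fun _ => 1) w) :
    ∀ x, w x ≤ 2 ^ ((G.neighborFinset x).filter (fun y => w y = 0)).card := by
  induction hw with
  | refl => intro x; simp
  | @tail b c _ hmove ih =>
    obtain ⟨u, v0, hadj, hu, huv, rfl⟩ := hmove
    have hne : u ≠ v0 := G.ne_of_adj hadj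
    set w' := Function.update (Function.update b v0 (b v0 + b u)) u 0 with hw'
    have hzero : ∀ y, b y = 0 → w' y = 0 := by
      intro y hy
      rcases eq_or_ne y u with rfl | hyu
      · simp [w']
      · rcases eq_or_ne y v0 with rfl | hyv
        · omega
        · simp [w', Function.update_of_ne hyu, Function.update_of_ne hyv, hy]
    have hsub : ∀ z, ((G.neighborFinset z).filter (fun y => b y = 0)) ⊆
        ((G.neighborFinset z).filter (fun y => w' y = 0)) := by
      intro z y hy
      simp only [Finset.mem_filter] at hy ⊢
      exact ⟨hy.1, hzero y hy.2⟩
    intro x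
    by_cases hxu : x = u
    · subst hxu; simp [w']
    by_cases hxv : x = v0
    · subst hxv
      have hval : w' x = b x + b u := by
        simp [w', Function.update_of_ne (Ne.symm hne)]
      have hk := ih x
      have hsum : b x + b u ≤
          2 ^ (((G.neighborFinset x).filter (fun y => b y = 0)).card + 1) := by
        have h2 : b u ≤ 2 ^ ((G.neighborFinset x).filter (fun y => b y = 0)).card :=
          huv.trans hk
        rw [pow_succ]
        omega
      have hins : insert u ((G.neighborFinset x).filter (fun y => b y = 0)) ⊆
          ((G.neighborFinset x).filter (fun y => w' y = 0)) := by
        intro y hy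
        rcases Finset.mem_insert.mp hy with rfl | hy
        · simp [Finset.mem_filter, G.mem_neighborFinset, hadj.symm, w']
        · exact hsub x hy
      have hnotmem : u ∉ (G.neighborFinset x).filter (fun y => b y = 0) := by
        simp only [Finset.mem_filter, not_and]
        intro _
        omega
      have hcard : ((G.neighborFinset x).filter (fun y => b y = 0)).card + 1 ≤
          ((G.neighborFinset x).filter (fun y => w' y = 0)).card := by
        calc ((G.neighborFinset x).filter (fun y => b y = 0)).card + 1
            = (insert u ((G.neighborFinset x).filter (fun y => b y = 0))).card :=
              (Finset.card_insert_of_notMem hnotmem).symm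
          _ ≤ _ := Finset.card_le_card hins
      rw [hval]
      exact hsum.trans (Nat.pow_le_pow_right (by norm_num) hcard)
    · have hval : w' x = b x := by
        simp [w', Function.update_of_ne hxu, Function.update_of_ne hxv]
      rw [hval]
      exact (ih x).trans
        (Nat.pow_le_pow_right (by norm_num) (Finset.card_le_card (hsub x)))

/-- A vertex can never acquire weight exceeding `2 ^ deg(v)`. -/
theorem weight_le_two_pow_degree {V : Type*} [Fintype V] [DecidableEq V]
    (G : SimpleGraph V) [DecidableRel G.Adj] (w : V → ℕ)
    (hw : AcqReach G (fun _ => 1) w) (v : V) :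
    w v ≤ 2 ^ G.degree v := by
  exact (acq_invariant G w hw v).trans
    (Nat.pow_le_pow_right (by norm_num) (Finset.card_filter_le _ _))
end

section
/- If a vertex u₀ transfers its initial unit weight to a vertex v along a path (u₀, u₁, …, u_k = v) by consecutive total acquisition moves (the move from u_{i-1} to u_i occurring interleaved with possibly other moves), then immediately after the move from u_{i-1} onto u_i, the weight on u_i is at least 2^i. In particular, if u₀'s unit contributed to a weight w on v at some time, then the graph distance from u₀ to v is at most log₂ w. -/
/-!
Each move along the path at least doubles the weight it carries, because the move from `u i`
onto `u (i+1)` is legal only if `u (i+1)` already holds at least the weight of `u i`. Between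
two consecutive moves of the path the weight on `u i` cannot drop: a vertex loses weight only
by sending all of it away, after which it stays empty for good, since a move onto it requires it
to hold at least the positive weight being moved. So after `i + 1` moves the weight is at least
`2 ^ (i + 1)`, and the path of length `k` bounds the graph distance.
-/
theorem SimpleGraph.dist_le_of_adj_succ {V : Type*} {G : SimpleGraph V} {k : ℕ}
    (u : Fin (k + 1) → V) (hadj : ∀ i : Fin k, G.Adj (u i.castSucc) (u i.succ)) :
    G.dist (u 0) (u (Fin.last k)) ≤ k := by
  have hwalk : ∀ j : Fin (k + 1), ∃ p : G.Walk (u 0) (u j), p.length = j := by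
    intro j
    induction j using Fin.induction with
    | zero => exact ⟨.nil, rfl⟩
    | succ j ih =>
      obtain ⟨p, hp⟩ := ih
      exact ⟨p.concat (hadj j), by simp [hp]⟩
  obtain ⟨p, hp⟩ := hwalk (Fin.last k)
  simpa [hp] using G.dist_le p

section Acquisition

variable {V : Type*} [DecidableEq V] {G : SimpleGraph V}

theorem two_mul_le_update_acquire (w : V → ℕ) {a b : V} (hab : a ≠ b) (hle : w a ≤ w b) :
    2 * w a ≤ Function.update (Function.update w b (w b + w a)) a 0 b := by
  rw [Function.update_of_ne hab.symm, Function.update_self]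
  omega

theorem AcqMove.pos_and_le_of_pos {w w' : V → ℕ} (h : AcqMove G w w') {x : V}
    (hx : 0 < w' x) : 0 < w x ∧ w x ≤ w' x := by
  obtain ⟨a, b, -, ha, hab, rfl⟩ := h
  by_cases hxa : x = a
  · simp [hxa] at hx
  by_cases hxb : x = b
  · subst hxb
    simp only [Function.update_of_ne hxa, Function.update_self]
    omega
  · simp_all [Function.update_of_ne]

theorem AcqReach.pos_and_le_of_pos {w w' : V → ℕ} (h : AcqReach G w w') {x : V}
    (hx : 0 < w' x) : 0 < w x ∧ w x ≤ w' x := by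
  induction h using Relation.ReflTransGen.head_induction_on with
  | refl => exact ⟨hx, le_rfl⟩
  | head hmove _ ih =>
    obtain ⟨hpos, hle⟩ := hmove.pos_and_le_of_pos ih.1
    exact ⟨hpos, hle.trans ih.2⟩

theorem acqReach_of_le {s : ℕ → V → ℕ}
    (hstep : ∀ n, AcqMove G (s n) (s (n + 1)) ∨ s (n + 1) = s n) {a b : ℕ} (hab : a ≤ b) :
    AcqReach G (s a) (s b) :=
  Nat.rel_of_forall_rel_succ_of_le (Relation.ReflTransGen (AcqMove G))
    (fun n => (hstep n).elim .single fun h => h ▸ .refl) hab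

theorem two_pow_le_weight_of_path_moves {s : ℕ → V → ℕ}
    (hstep : ∀ n, AcqMove G (s n) (s (n + 1)) ∨ s (n + 1) = s n)
    {k : ℕ} {u : Fin (k + 1) → V} (hadj : ∀ i : Fin k, G.Adj (u i.castSucc) (u i.succ))
    {t : Fin k → ℕ} (ht : StrictMono t)
    (hmove : ∀ i : Fin k,
      0 < s (t i) (u i.castSucc) ∧
      s (t i) (u i.castSucc) ≤ s (t i) (u i.succ) ∧
      s (t i + 1) = Function.update
        (Function.update (s (t i)) (u i.succ)
          (s (t i) (u i.succ) + s (t i) (u i.castSucc))) (u i.castSucc) 0) :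
    ∀ i : Fin k, 2 ^ ((i : ℕ) + 1) ≤ s (t i + 1) (u i.succ) := by
  have hdouble : ∀ i : Fin k, 2 * s (t i) (u i.castSucc) ≤ s (t i + 1) (u i.succ) := fun i =>
    (hmove i).2.2 ▸ two_mul_le_update_acquire _ (hadj i).ne (hmove i).2.1
  rintro ⟨m, hm⟩
  induction m with
  | zero => simpa using (Nat.mul_le_mul_left 2 (hmove ⟨0, hm⟩).1).trans (hdouble ⟨0, hm⟩)
  | succ m ih =>
    let i : Fin k := ⟨m + 1, hm⟩
    let j : Fin k := ⟨m, by omega⟩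
    have hgrow : s (t j + 1) (u i.castSucc) ≤ s (t i) (u i.castSucc) :=
      ((acqReach_of_le hstep (ht (show j < i from Nat.lt_succ_self m))).pos_and_le_of_pos
        (hmove i).1).2
    calc 2 ^ (m + 1 + 1) = 2 * 2 ^ (m + 1) := by ring
      _ ≤ 2 * s (t i) (u i.castSucc) := by gcongr; exact (ih (by omega)).trans hgrow
      _ ≤ s (t i + 1) (u i.succ) := hdouble i

end Acquisition

theorem path_transfer_weight_ge_two_pow_general {V : Type*} [DecidableEq V]
    (G : SimpleGraph V) (k : ℕ)
    (s : ℕ → V → ℕ)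
    (hstep : ∀ n, AcqMove G (s n) (s (n + 1)) ∨ s (n + 1) = s n)
    (u : Fin (k + 1) → V)
    (hadj : ∀ i : Fin k, G.Adj (u i.castSucc) (u i.succ))
    (t : Fin k → ℕ) (ht : StrictMono t)
    (hmove : ∀ i : Fin k,
      0 < s (t i) (u i.castSucc) ∧
      s (t i) (u i.castSucc) ≤ s (t i) (u i.succ) ∧
      s (t i + 1) = Function.update
        (Function.update (s (t i)) (u i.succ)
          (s (t i) (u i.succ) + s (t i) (u i.castSucc))) (u i.castSucc) 0) :
    (∀ i : Fin k, 2 ^ ((i : ℕ) + 1) ≤ s (t i + 1) (u i.succ)) ∧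
    (∀ i : Fin k, (i : ℕ) = k - 1 →
      G.dist (u 0) (u (Fin.last k)) ≤ Nat.log 2 (s (t i + 1) (u (Fin.last k)))) := by
  have hweight := two_pow_le_weight_of_path_moves hstep hadj ht hmove
  refine ⟨hweight, fun i hi => ?_⟩
  have hlast : i.succ = Fin.last k := Fin.ext (by simp only [Fin.val_succ, Fin.val_last]; omega)
  have hpow : 2 ^ k ≤ s (t i + 1) (u (Fin.last k)) := by
    have := hweight i
    rwa [hlast, show (i : ℕ) + 1 = k by omega] at this
  calc G.dist (u 0) (u (Fin.last k)) ≤ k := G.dist_le_of_adj_succ u hadj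
    _ ≤ Nat.log 2 (s (t i + 1) (u (Fin.last k))) :=
      Nat.le_log_of_pow_le (by norm_num) hpow

/-- If a vertex `u 0` transfers its initial unit weight to `v = u (Fin.last k)`
along a path `u 0, u 1, …, u k` by consecutive total acquisition moves,
interleaved with possibly other moves (the protocol `s` makes the move from
`u i` to `u (i+1)` at time `t i`, with times strictly increasing), then
immediately after the move from `u i` onto `u (i+1)` the weight on `u (i+1)`
is at least `2 ^ (i+1)`.  In particular, right after the final move, the graph
distance from `u 0` to `v` is at most `log₂ w`, where `w` is the weight then
held by `v`. -/
theorem path_transfer_weight_ge_two_pow {V : Type*} [DecidableEq V]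
    (G : SimpleGraph V) (k : ℕ)
    (s : ℕ → V → ℕ) (h0 : s 0 = fun _ => 1)
    (hstep : ∀ n, AcqMove G (s n) (s (n + 1)) ∨ s (n + 1) = s n)
    (u : Fin (k + 1) → V)
    (hadj : ∀ i : Fin k, G.Adj (u i.castSucc) (u i.succ))
    (t : Fin k → ℕ) (ht : StrictMono t)
    (hmove : ∀ i : Fin k,
      0 < s (t i) (u i.castSucc) ∧
      s (t i) (u i.castSucc) ≤ s (t i) (u i.succ) ∧
      s (t i + 1) = Function.update
        (Function.update (s (t i)) (u i.succ)
          (s (t i) (u i.succ) + s (t i) (u i.castSucc))) (u i.castSucc) 0) :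
    (∀ i : Fin k, 2 ^ ((i : ℕ) + 1) ≤ s (t i + 1) (u i.succ)) ∧
    (∀ i : Fin k, (i : ℕ) = k - 1 →
      G.dist (u 0) (u (Fin.last k)) ≤ Nat.log 2 (s (t i + 1) (u (Fin.last k)))) :=
  path_transfer_weight_ge_two_pow_general G k s hstep u hadj t ht hmove
end

section
/- The total acquisition number of the cycle C_{4k} equals k for every positive integer k. -/
/-!
Lower bound: along any protocol from the all-ones weighting, a vertex carries at most
`2 ^ (number of its neighbours of weight 0)`, because a move at most doubles the receiver's
weight while emptying one more of its neighbours. On `C_{4k}` every vertex has two neighbours,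
so each vertex that keeps weight holds at most `4` of the `4k` units, and at least `k` vertices
keep weight.

Upper bound: gather every block `4i, 4i+1, 4i+2, 4i+3` onto `4i+2`. The `k` remaining
vertices are pairwise non-adjacent and surrounded by empty vertices, so no move is left.
-/

open Finset

section General

variable {V : Type*} {G : SimpleGraph V} {w w' : V → ℕ}

section ZeroNeighbors

variable [G.LocallyFinite]

variable (G) in
def zeroNeighborFinset (w : V → ℕ) (x : V) : Finset V := {y ∈ G.neighborFinset x | w y = 0}

theorem card_zeroNeighborFinset_le_degree (w : V → ℕ) (x : V) :
    #(zeroNeighborFinset G w x) ≤ G.degree x :=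
  card_filter_le _ _

end ZeroNeighbors

variable [DecidableEq V]

theorem AcqMove.sum_eq [Fintype V] (h : AcqMove G w w') : ∑ x, w' x = ∑ x, w x := by
  obtain ⟨u, v, huv, -, -, rfl⟩ := h
  set g := Function.update w v (w v + w u)
  have hg_v : ∑ x, g x = w v + w u + ∑ x ∈ univ \ {v}, w x :=
    sum_update_of_mem (mem_univ v) _ _
  have hg_u : ∑ x, g x = w u + ∑ x ∈ univ \ {u}, g x := by
    rw [sum_eq_add_sum_sdiff_singleton_of_mem (mem_univ u),
      show g u = w u from Function.update_of_ne huv.ne _ _]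
  have hw_v : ∑ x, w x = w v + ∑ x ∈ univ \ {v}, w x :=
    sum_eq_add_sum_sdiff_singleton_of_mem (mem_univ v) _
  rw [sum_update_of_mem (mem_univ u)]
  omega

theorem AcqReach.sum_eq [Fintype V] (h : AcqReach G w w') : ∑ x, w' x = ∑ x, w x := by
  induction h with
  | refl => rfl
  | tail _ hmove ih => rw [hmove.sum_eq, ih]

theorem AcqMove.eq_zero_of_eq_zero (h : AcqMove G w w') {x : V} (hx : w x = 0) : w' x = 0 := by
  obtain ⟨u, v, -, hu, huv, rfl⟩ := h
  have hxu : x ≠ u := by rintro rfl; omega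
  have hxv : x ≠ v := by rintro rfl; omega
  simp [Function.update_of_ne, hxu, hxv, hx]

theorem totalAcq_le (hw : AcqReach G (fun _ ↦ 1) w) (hmax : AcqMaximal G w) :
    totalAcq G ≤ {x | 0 < w x}.ncard :=
  Nat.sInf_le ⟨w, hw, hmax, rfl⟩

variable [G.LocallyFinite]

theorem AcqMove.zeroNeighborFinset_subset (h : AcqMove G w w') (x : V) :
    zeroNeighborFinset G w x ⊆ zeroNeighborFinset G w' x :=
  monotone_filter_right _ fun _ _ hy ↦ h.eq_zero_of_eq_zero hy

theorem AcqMove.le_two_pow_card_zeroNeighborFinset (h : AcqMove G w w')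
    (hw : ∀ x, w x ≤ 2 ^ #(zeroNeighborFinset G w x)) (x : V) :
    w' x ≤ 2 ^ #(zeroNeighborFinset G w' x) := by
  have hmono := h.zeroNeighborFinset_subset
  obtain ⟨u, v, huv, hu, hle, rfl⟩ := h
  by_cases hxu : x = u
  · simp [hxu]
  by_cases hxv : x = v
  · subst hxv
    have hsub : insert u (zeroNeighborFinset G w x) ⊆ zeroNeighborFinset G
        (Function.update (Function.update w x (w x + w u)) u 0) x := by
      refine insert_subset ?_ (hmono x)
      simp [zeroNeighborFinset, huv.symm]
    have hcard : #(zeroNeighborFinset G w x) + 1 ≤ #(zeroNeighborFinset G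
        (Function.update (Function.update w x (w x + w u)) u 0) x) := by
      have hu_notMem : u ∉ zeroNeighborFinset G w x := by simp [zeroNeighborFinset, hu.ne']
      rw [← card_insert_of_notMem hu_notMem]
      exact card_le_card hsub
    calc Function.update (Function.update w x (w x + w u)) u 0 x = w x + w u := by
          simp [Function.update_of_ne hxu]
      _ ≤ 2 * 2 ^ #(zeroNeighborFinset G w x) := by linarith [hw x]
      _ ≤ _ := by rw [← pow_succ']; exact Nat.pow_le_pow_right two_pos hcard
  · calc Function.update (Function.update w v (w v + w u)) u 0 x = w x := by
          simp [Function.update_of_ne hxu, Function.update_of_ne hxv]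
      _ ≤ _ := hw x
      _ ≤ _ := Nat.pow_le_pow_right two_pos (card_le_card (hmono x))

theorem AcqReach.le_two_pow_card_zeroNeighborFinset (h : AcqReach G (fun _ ↦ 1) w) (x : V) :
    w x ≤ 2 ^ #(zeroNeighborFinset G w x) := by
  induction h generalizing x with
  | refl => exact Nat.one_le_two_pow
  | tail _ hmove ih => exact hmove.le_two_pow_card_zeroNeighborFinset ih x

theorem AcqReach.le_two_pow_degree (h : AcqReach G (fun _ ↦ 1) w) (x : V) :
    w x ≤ 2 ^ G.degree x :=
  (h.le_two_pow_card_zeroNeighborFinset x).trans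
    (Nat.pow_le_pow_right two_pos (card_zeroNeighborFinset_le_degree w x))

theorem AcqReach.card_le_two_pow_mul_ncard [Fintype V] {d : ℕ} (h : AcqReach G (fun _ ↦ 1) w)
    (hd : ∀ x, G.degree x ≤ d) : Fintype.card V ≤ 2 ^ d * {x | 0 < w x}.ncard := by
  classical
  rw [Set.ncard_eq_toFinset_card', Set.toFinset_ofPred]
  calc Fintype.card V = ∑ x, w x := by simp [h.sum_eq]
    _ = ∑ x with 0 < w x, w x := (sum_filter_of_ne fun x _ hx ↦ by omega).symm
    _ ≤ ∑ x with 0 < w x, 2 ^ d := sum_le_sum fun x _ ↦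
        (h.le_two_pow_degree x).trans (Nat.pow_le_pow_right two_pos (hd x))
    _ = _ := by rw [sum_const, smul_eq_mul, mul_comm]

theorem card_le_two_pow_mul_totalAcq [Fintype V] {d : ℕ} (hd : ∀ x, G.degree x ≤ d)
    (hw : AcqReach G (fun _ ↦ 1) w) (hmax : AcqMaximal G w) :
    Fintype.card V ≤ 2 ^ d * totalAcq G := by
  obtain ⟨w', hw', -, hcard⟩ : totalAcq G ∈ _ := Nat.sInf_mem ⟨_, w, hw, hmax, rfl⟩
  rw [hcard]
  exact hw'.card_le_two_pow_mul_ncard hd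

end General

section Cycle

open SimpleGraph

theorem cycleGraph_degree_le_two (n : ℕ) (v : Fin n) : (cycleGraph n).degree v ≤ 2 := by
  match n with
  | 0 => exact v.elim0
  | 1 => simp [cycleGraph_one_eq_bot]
  | n + 2 => exact cycleGraph_degree_two_le.trans_le card_le_two

theorem cycleGraph_adj_of_val_add_one {n : ℕ} {u v : Fin n} (h : (u : ℕ) + 1 = v) :
    (cycleGraph n).Adj u v :=
  pathGraph_le_cycleGraph (pathGraph_adj.mpr (Or.inl h))

theorem cycleGraph_val_mod_of_adj {n m : ℕ} (hm : m ∣ n) {u v : Fin n}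
    (h : (cycleGraph n).Adj u v) :
    (v : ℕ) % m = ((u : ℕ) + 1) % m ∨ (u : ℕ) % m = ((v : ℕ) + 1) % m := by
  cases n with
  | zero => exact u.elim0
  | succ n => ?_
  have key : ∀ x y : Fin (n + 1), (y - x).val = 1 → (y : ℕ) % m = ((x : ℕ) + 1) % m := by
    intro x y hxy
    rw [← sub_add_cancel y x, Fin.val_add, hxy, Nat.mod_mod_of_dvd _ hm, add_comm]
  rcases cycleGraph_adj'.mp h with h | h
  · exact .inr (key v u h)
  · exact .inl (key u v h)

theorem acqMove_cycleGraph_of_nat {n a b : ℕ} {f g : ℕ → ℕ} (ha : a < n) (hb : b < n)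
    (hab : a + 1 = b ∨ b + 1 = a) (hpos : 0 < f a) (hle : f a ≤ f b)
    (hga : g a = 0) (hgb : g b = f b + f a) (hg : ∀ p, p ≠ a → p ≠ b → g p = f p) :
    AcqMove (cycleGraph n) (fun v ↦ f v) (fun v ↦ g v) := by
  refine ⟨⟨a, ha⟩, ⟨b, hb⟩, ?_, hpos, hle, ?_⟩
  · rcases hab with hab | hab
    · exact cycleGraph_adj_of_val_add_one hab
    · exact (cycleGraph_adj_of_val_add_one hab).symm
  · funext v
    simp only [Function.update_apply, Fin.ext_iff]
    split_ifs with hva hvb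
    · rwa [hva]
    · rwa [hvb]
    · exact hg v hva hvb

def gatheredWeight (j p : ℕ) : ℕ := if p < 4 * j then (if p % 4 = 2 then 4 else 0) else 1

theorem acqReach_gatheredWeight_succ {k j : ℕ} (hj : j < k) :
    AcqReach (cycleGraph (4 * k)) (fun v ↦ gatheredWeight j v)
      (fun v ↦ gatheredWeight (j + 1) v) := by
  let w₁ p := if p = 4 * j + 2 then 2 else if p = 4 * j + 3 then 0 else gatheredWeight j p
  let w₂ p := if p = 4 * j ∨ p = 4 * j + 3 then 0
    else if p = 4 * j + 1 ∨ p = 4 * j + 2 then 2 else gatheredWeight j p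
  have move₁ :
      AcqMove (cycleGraph (4 * k)) (fun v ↦ gatheredWeight j v) (fun v ↦ w₁ v) := by
    apply acqMove_cycleGraph_of_nat (a := 4 * j + 3) (b := 4 * j + 2) (f := gatheredWeight j)
      (g := w₁) <;> grind [gatheredWeight]
  have move₂ : AcqMove (cycleGraph (4 * k)) (fun v ↦ w₁ v) (fun v ↦ w₂ v) := by
    apply acqMove_cycleGraph_of_nat (a := 4 * j) (b := 4 * j + 1) (f := w₁) (g := w₂) <;>
      grind [gatheredWeight]
  have move₃ :
      AcqMove (cycleGraph (4 * k)) (fun v ↦ w₂ v) (fun v ↦ gatheredWeight (j + 1) v) := by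
    apply acqMove_cycleGraph_of_nat (a := 4 * j + 1) (b := 4 * j + 2) (f := w₂)
      (g := gatheredWeight (j + 1)) <;> grind [gatheredWeight]
  exact .head move₁ (.head move₂ (.single move₃))

theorem acqReach_gatheredWeight {k j : ℕ} (hj : j ≤ k) :
    AcqReach (cycleGraph (4 * k)) (fun _ ↦ 1) (fun v ↦ gatheredWeight j v) := by
  induction j with
  | zero => simp only [gatheredWeight, mul_zero, Nat.not_lt_zero, if_false]; exact .refl
  | succ j ih => exact (ih (by omega)).trans (acqReach_gatheredWeight_succ (by omega))

theorem acqMaximal_gatheredWeight (k : ℕ) :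
    AcqMaximal (cycleGraph (4 * k)) (fun v ↦ gatheredWeight k v) := by
  rintro _ ⟨u, v, huv, hpos, hle, -⟩
  have hmod := cycleGraph_val_mod_of_adj (dvd_mul_right 4 k) huv
  have := u.isLt
  have := v.isLt
  simp only [gatheredWeight] at hpos hle
  split_ifs at hpos hle <;> omega

theorem ncard_gatheredWeight_pos (k : ℕ) :
    {v : Fin (4 * k) | 0 < gatheredWeight k v}.ncard = k := by
  have hrange : {v : Fin (4 * k) | 0 < gatheredWeight k v}
      = Set.range (fun i : Fin k ↦ (⟨4 * i + 2, by omega⟩ : Fin (4 * k))) := by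
    ext v
    have := v.isLt
    simp only [gatheredWeight, Set.mem_ofPred_eq, Set.mem_range, Fin.ext_iff]
    constructor
    · intro h
      exact ⟨⟨v / 4, by omega⟩, show 4 * (v / 4 : ℕ) + 2 = v by split_ifs at h <;> omega⟩
    · rintro ⟨i, hi⟩
      split_ifs <;> omega
  rw [hrange, Set.ncard_range_of_injective (fun i j h ↦ by simpa [Fin.ext_iff] using h),
    Nat.card_eq_fintype_card, Fintype.card_fin]

end Cycle

theorem totalAcq_cycleGraph_general (k : ℕ) :
    totalAcq (SimpleGraph.cycleGraph (4 * k)) = k := by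
  have hreach := acqReach_gatheredWeight (k := k) le_rfl
  have hmax := acqMaximal_gatheredWeight k
  apply le_antisymm
  · exact (totalAcq_le hreach hmax).trans_eq (ncard_gatheredWeight_pos k)
  · have := card_le_two_pow_mul_totalAcq (cycleGraph_degree_le_two (4 * k)) hreach hmax
    rw [Fintype.card_fin] at this
    omega

/-- The total acquisition number of the cycle `C_{4k}` equals `k` for every
positive integer `k`. -/
theorem totalAcq_cycleGraph (k : ℕ) (hk : 0 < k) :
    totalAcq (SimpleGraph.cycleGraph (4 * k)) = k :=
  totalAcq_cycleGraph_general k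
end

section
/- The total acquisition number of the path P_n on n vertices is at most ⌈n/4⌉. -/
def fwt (n i : ℕ) : ℕ :=
  if i % 4 = 1 ∧ i + 3 ≤ n then 4
  else if i % 4 = 1 ∧ i + 1 = n then 2
  else if i % 4 = 1 ∧ i + 2 = n then 3
  else if i % 4 = 0 ∧ i + 1 = n then 1
  else 0
def Wst (n m : ℕ) : Fin n → ℕ := fun i => if i.val < m then fwt n i.val else 1

lemma fwt_pos {n i : ℕ} (h : 0 < fwt n i) :
    (i % 4 = 1 ∧ i < n) ∨ (i % 4 = 0 ∧ i + 1 = n) := by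
  unfold fwt at h
  split_ifs at h <;> omega

lemma move_step {n : ℕ} (w w' : Fin n → ℕ) (a b : ℕ) (ha : a < n) (hb : b < n)
    (hadj : a + 1 = b ∨ b + 1 = a) (h1 : 0 < w ⟨a, ha⟩) (h2 : w ⟨a, ha⟩ ≤ w ⟨b, hb⟩)
    (hw' : ∀ i : Fin n, w' i =
      if i.val = a then 0 else if i.val = b then w ⟨b, hb⟩ + w ⟨a, ha⟩ else w i) :
    AcqMove (SimpleGraph.pathGraph n) w w' := by
  refine ⟨⟨a, ha⟩, ⟨b, hb⟩, ?_, h1, h2, ?_⟩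
  · rw [SimpleGraph.pathGraph_adj]; simpa using hadj
  · funext i
    rcases i with ⟨j, hj⟩
    rw [hw' ⟨j, hj⟩]
    simp only [Function.update_apply, Fin.mk.injEq]
set_option maxHeartbeats 4000000 in
lemma block_step {n : ℕ} (m : ℕ) (hm : m % 4 = 0) (h4 : m + 4 ≤ n) :
    AcqReach (SimpleGraph.pathGraph n) (Wst n m) (Wst n (m + 4)) := by
  have mv1 : AcqMove (SimpleGraph.pathGraph n) (Wst n m)
      (fun i : Fin n => if i.val = m then 0 else if i.val = m + 1 then 2 else Wst n m i) := by
    refine move_step _ _ m (m + 1) (by omega) (by omega) (by omega) ?_ ?_ ?_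
    · simp only [Wst]; split_ifs <;> omega
    · simp only [Wst]; split_ifs <;> omega
    · intro i; simp only [Wst]; split_ifs <;> omega
  have mv2 : AcqMove (SimpleGraph.pathGraph n)
      (fun i : Fin n => if i.val = m then 0 else if i.val = m + 1 then 2 else Wst n m i)
      (fun i : Fin n => if i.val = m + 3 then 0 else if i.val = m + 2 then 2 else
        if i.val = m then 0 else if i.val = m + 1 then 2 else Wst n m i) := by
    refine move_step _ _ (m + 3) (m + 2) (by omega) (by omega) (by omega) ?_ ?_ ?_
    · simp only [Wst]; split_ifs <;> omega
    · simp only [Wst]; split_ifs <;> omega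
    · intro i; simp only [Wst]; split_ifs <;> omega
  have mv3 : AcqMove (SimpleGraph.pathGraph n)
      (fun i : Fin n => if i.val = m + 3 then 0 else if i.val = m + 2 then 2 else
        if i.val = m then 0 else if i.val = m + 1 then 2 else Wst n m i)
      (Wst n (m + 4)) := by
    refine move_step _ _ (m + 2) (m + 1) (by omega) (by omega) (by omega) ?_ ?_ ?_
    · simp only [Wst]; split_ifs <;> omega
    · simp only [Wst]; split_ifs <;> omega
    · intro i; simp only [Wst, fwt]; split_ifs <;> omega
  exact Relation.ReflTransGen.head mv1 (Relation.ReflTransGen.head mv2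
    (Relation.ReflTransGen.single mv3))

lemma reach_blocks {n : ℕ} (k : ℕ) (hk : 4 * k ≤ n) :
    AcqReach (SimpleGraph.pathGraph n) (fun _ => 1) (Wst n (4 * k)) := by
  induction k with
  | zero =>
      have h0 : Wst n 0 = (fun _ => (1 : ℕ)) := by funext i; simp [Wst]
      rw [show 4 * 0 = 0 from rfl, h0]
      exact Relation.ReflTransGen.refl
  | succ k ih =>
      have h2 : AcqReach (SimpleGraph.pathGraph n) (Wst n (4 * k)) (Wst n (4 * k + 4)) :=
        block_step (4 * k) (by omega) (by omega)
      rw [show 4 * (k + 1) = 4 * k + 4 by ring]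
      exact (ih (by omega)).trans h2

set_option maxHeartbeats 4000000 in
lemma reach_mod1 (q : ℕ) :
    AcqReach (SimpleGraph.pathGraph (4 * q + 1)) (fun _ => 1)
      (Wst (4 * q + 1) (4 * q + 1)) := by
  have hbase := reach_blocks (n := 4 * q + 1) q (by omega)
  have he : Wst (4 * q + 1) (4 * q) = Wst (4 * q + 1) (4 * q + 1) := by
    funext i
    have hi := i.isLt
    simp only [Wst, fwt]
    split_ifs <;> omega
  rwa [he] at hbase

set_option maxHeartbeats 4000000 in
lemma reach_mod2 (q : ℕ) :
    AcqReach (SimpleGraph.pathGraph (4 * q + 2)) (fun _ => 1)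
      (Wst (4 * q + 2) (4 * q + 2)) := by
  have hbase := reach_blocks (n := 4 * q + 2) q (by omega)
  have mv : AcqMove (SimpleGraph.pathGraph (4 * q + 2)) (Wst (4 * q + 2) (4 * q))
      (Wst (4 * q + 2) (4 * q + 2)) := by
    refine move_step _ _ (4 * q) (4 * q + 1) (by omega) (by omega) (by omega) ?_ ?_ ?_
    · simp only [Wst]; split_ifs <;> omega
    · simp only [Wst]; split_ifs <;> omega
    · intro i
      have hi := i.isLt
      simp only [Wst, fwt]; split_ifs <;> omega
  exact hbase.trans (Relation.ReflTransGen.single mv)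

set_option maxHeartbeats 4000000 in
lemma reach_mod3 (q : ℕ) :
    AcqReach (SimpleGraph.pathGraph (4 * q + 3)) (fun _ => 1)
      (Wst (4 * q + 3) (4 * q + 3)) := by
  have hbase := reach_blocks (n := 4 * q + 3) q (by omega)
  have mv1 : AcqMove (SimpleGraph.pathGraph (4 * q + 3)) (Wst (4 * q + 3) (4 * q))
      (fun i : Fin (4 * q + 3) => if i.val = 4 * q then 0 else
        if i.val = 4 * q + 1 then 2 else Wst (4 * q + 3) (4 * q) i) := by
    refine move_step _ _ (4 * q) (4 * q + 1) (by omega) (by omega) (by omega) ?_ ?_ ?_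
    · simp only [Wst]; split_ifs <;> omega
    · simp only [Wst]; split_ifs <;> omega
    · intro i; simp only [Wst]; split_ifs <;> omega
  have mv2 : AcqMove (SimpleGraph.pathGraph (4 * q + 3))
      (fun i : Fin (4 * q + 3) => if i.val = 4 * q then 0 else
        if i.val = 4 * q + 1 then 2 else Wst (4 * q + 3) (4 * q) i)
      (Wst (4 * q + 3) (4 * q + 3)) := by
    refine move_step _ _ (4 * q + 2) (4 * q + 1) (by omega) (by omega) (by omega) ?_ ?_ ?_
    · simp only [Wst]; split_ifs <;> omega
    · simp only [Wst]; split_ifs <;> omega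
    · intro i
      have hi := i.isLt
      simp only [Wst, fwt]; split_ifs <;> omega
  exact hbase.trans (Relation.ReflTransGen.head mv1 (Relation.ReflTransGen.single mv2))

lemma reach_final (n : ℕ) :
    AcqReach (SimpleGraph.pathGraph n) (fun _ => 1) (fun i : Fin n => fwt n i.val) := by
  have hfin : (fun i : Fin n => fwt n i.val) = Wst n n := by
    funext i; simp [Wst, i.isLt]
  rw [hfin]
  have hr : n % 4 = 0 ∨ n % 4 = 1 ∨ n % 4 = 2 ∨ n % 4 = 3 := by omega
  rcases hr with h | h | h | h
  · obtain ⟨q, rfl⟩ : ∃ q, n = 4 * q := ⟨n / 4, by omega⟩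
    exact reach_blocks q le_rfl
  · obtain ⟨q, rfl⟩ : ∃ q, n = 4 * q + 1 := ⟨n / 4, by omega⟩
    exact reach_mod1 q
  · obtain ⟨q, rfl⟩ : ∃ q, n = 4 * q + 2 := ⟨n / 4, by omega⟩
    exact reach_mod2 q
  · obtain ⟨q, rfl⟩ : ∃ q, n = 4 * q + 3 := ⟨n / 4, by omega⟩
    exact reach_mod3 q

lemma final_maximal (n : ℕ) :
    AcqMaximal (SimpleGraph.pathGraph n) (fun i : Fin n => fwt n i.val) := by
  rintro w' ⟨u, v, hadj, hu, huv, -⟩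
  rw [SimpleGraph.pathGraph_adj] at hadj
  have hv : 0 < fwt n v.val := lt_of_lt_of_le hu huv
  have h1 := fwt_pos hu
  have h2 := fwt_pos hv
  omega

/-- The total acquisition number of the path on `n` vertices is at most
`⌈n/4⌉` (written here as `(n + 3) / 4` in natural number arithmetic). -/
theorem totalAcq_pathGraph_le (n : ℕ) :
    totalAcq (SimpleGraph.pathGraph n) ≤ (n + 3) / 4 := by
  have hreach := reach_final n
  have hfin : (fun i : Fin n => fwt n i.val) = Wst n n := by
    funext i; simp [Wst, i.isLt]
  rw [hfin] at hreach
  rw [← hfin] at hreach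
  have hmem : {v : Fin n | 0 < fwt n v.val}.ncard ∈
      { m | ∃ w, AcqReach (SimpleGraph.pathGraph n) (fun _ => 1) w ∧
          AcqMaximal (SimpleGraph.pathGraph n) w ∧ m = {v | 0 < w v}.ncard } :=
    ⟨fun i : Fin n => fwt n i.val, reach_final n, final_maximal n, rfl⟩
  have h1 : totalAcq (SimpleGraph.pathGraph n) ≤ {v : Fin n | 0 < fwt n v.val}.ncard :=
    Nat.sInf_le hmem
  have h2 : {v : Fin n | 0 < fwt n v.val}.ncard ≤ (n + 3) / 4 := by
    have hle := Set.ncard_le_ncard_of_injOn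
      (s := {v : Fin n | 0 < fwt n v.val})
      (t := ((Finset.range ((n + 3) / 4) : Finset ℕ) : Set ℕ))
      (fun i : Fin n => i.val / 4)
      (fun a ha => by
        have hpa := fwt_pos (show 0 < fwt n a.val from ha)
        simp only [Finset.coe_range, Set.mem_Iio]
        omega)
      (fun a ha b hb hab => by
        have hpa := fwt_pos (show 0 < fwt n a.val from ha)
        have hpb := fwt_pos (show 0 < fwt n b.val from hb)
        have h3 := a.isLt
        have h4 := b.isLt
        exact Fin.ext (by simp only at hab; omega))
      (Finset.finite_toSet _)
    rwa [Set.ncard_coe_finset, Finset.card_range] at hle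
  exact h1.trans h2
end

section
/- For a graph G on n vertices in which every vertex has at most D vertices (including itself) within graph distance ⌈log₂ W⌉ + 1, where W ≥ D, every acquisition protocol leaves a residual set where each vertex holds weight at most W; consequently a_t(G) ≥ n / W. -/
/-!
Each unit of the initial weight can be followed to the vertex currently holding it, and every
vertex `v` holds `w v` units that all started within distance `⌈log₂ (w v)⌉` of `v`. This
survives a move of `u` onto `v`: since `w u ≤ w v`, the merged weight at least doubles `w u`,
which pays for the extra edge `v ~ u`. Hence `w v` is at most the size of the ball of radius
`⌈log₂ (w v)⌉` around `v`. As long as all weights are at most `W`, a merged weight is at most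
`2W`, so its ball has radius at most `⌈log₂ W⌉ + 1` and at most `D ≤ W` vertices. Since the
weights sum to `n`, at least `n / W` vertices keep positive weight.
-/

open Finset

namespace Nat

theorem clog_two_lt_clog_two_add {a b : ℕ} (ha : 0 < a) (hab : a ≤ b) :
    clog 2 a < clog 2 (a + b) := by
  rw [clog_of_one_lt one_lt_two (by omega : 1 < a + b)]
  exact Nat.lt_succ_of_le (clog_mono_right 2 (by omega))

theorem clog_two_le_clog_two_succ_of_le_two_mul {a W : ℕ} (h : a ≤ 2 * W) :
    clog 2 a ≤ clog 2 W + 1 :=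
  clog_le_of_le_pow <| by
    rw [pow_succ]
    linarith [le_pow_clog one_lt_two W]

end Nat

namespace AcqMove

variable {V : Type*} [DecidableEq V] {G : SimpleGraph V} {w w' : V → ℕ}

theorem card_support_lt [Fintype V] (h : AcqMove G w w') :
    #{x | 0 < w' x} < #{x | 0 < w x} := by
  obtain ⟨u, v, -, hu, huv, rfl⟩ := h
  refine card_lt_card ((ssubset_iff_of_subset ?_).2 ⟨u, by simpa using hu, by simp⟩)
  intro x
  simp only [mem_filter, mem_univ, true_and, Function.update_apply]
  split_ifs <;> subst_vars <;> omega

theorem le_two_mul {W : ℕ} (h : AcqMove G w w') (hw : ∀ x, w x ≤ W) (x : V) :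
    w' x ≤ 2 * W := by
  obtain ⟨u, v, -, -, -, rfl⟩ := h
  simp only [Function.update_apply]
  split_ifs <;> linarith [hw u, hw v, hw x]

end AcqMove

theorem exists_acqReach_acqMaximal {V : Type*} [Fintype V] [DecidableEq V]
    (G : SimpleGraph V) (w : V → ℕ) : ∃ w', AcqReach G w w' ∧ AcqMaximal G w' := by
  have hwf : WellFounded (flip (AcqMove G)) :=
    Subrelation.wf (fun h => h.card_support_lt) (measure fun w : V → ℕ => #{x | 0 < w x}).wf
  obtain ⟨w', hw', hmin⟩ := hwf.has_min {w' | AcqReach G w w'} ⟨w, .refl⟩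
  exact ⟨w', hw', fun w'' hmove => hmin w'' (Relation.ReflTransGen.tail hw' hmove) hmove⟩

/-- `o x` is the vertex currently holding the unit of weight that started at `x`. -/
structure AcqOwners {V : Type*} [Fintype V] [DecidableEq V] (G : SimpleGraph V)
    (w : V → ℕ) (o : V → V) : Prop where
  weight_eq : ∀ v, w v = #{x | o x = v}
  exists_walk : ∀ x, ∃ p : G.Walk (o x) x, p.length ≤ Nat.clog 2 (w (o x))

namespace AcqOwners

variable {V : Type*} [Fintype V] [DecidableEq V] {G : SimpleGraph V} {w : V → ℕ} {o : V → V}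

theorem one_id : AcqOwners G (fun _ => 1) id where
  weight_eq v := by simp [filter_eq']
  exists_walk x := ⟨.nil, by simp⟩

theorem sum_eq_card (h : AcqOwners G w o) : ∑ v, w v = Fintype.card V := by
  rw [← card_univ, card_eq_sum_card_fiberwise (f := o) (t := univ) (fun _ _ => mem_univ _)]
  simp only [h.weight_eq]

theorem exists_walk_of_eq (h : AcqOwners G w o) {x y : V} (hxy : o x = y) :
    ∃ p : G.Walk y x, p.length ≤ Nat.clog 2 (w y) :=
  hxy ▸ h.exists_walk x

theorem le_ncard_ball (h : AcqOwners G w o) {v : V} {r : ℕ} (hr : Nat.clog 2 (w v) ≤ r) :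
    w v ≤ {x | ∃ p : G.Walk v x, p.length ≤ r}.ncard := by
  rw [h.weight_eq, ← Set.ncard_coe_finset]
  refine Set.ncard_le_ncard (fun x hx => ?_) (Set.toFinite _)
  obtain ⟨p, hp⟩ := h.exists_walk_of_eq (by simpa using hx)
  exact ⟨p, hp.trans hr⟩

theorem exists_of_acqMove {w' : V → ℕ} (h : AcqOwners G w o) (hm : AcqMove G w w') :
    ∃ o', AcqOwners G w' o' := by
  obtain ⟨u, v, hadj, hu, huv, rfl⟩ := hm
  have hvu : v ≠ u := hadj.ne.symm
  have hw'u : Function.update (Function.update w v (w v + w u)) u 0 u = 0 := by simp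
  have hw'v : Function.update (Function.update w v (w v + w u)) u 0 v = w v + w u := by
    simp [hvu]
  refine ⟨fun x => if o x = u then v else o x, fun y => ?_, fun x => ?_⟩
  · rcases eq_or_ne y u with rfl | hyu
    · rw [hw'u, eq_comm, card_eq_zero, filter_eq_empty_iff]
      intro x _
      split_ifs <;> assumption
    rcases eq_or_ne y v with rfl | hyv
    · rw [hw'v, add_comm, h.weight_eq, h.weight_eq, ← card_union_of_disjoint
        (disjoint_filter.2 fun x _ hx => hx ▸ hvu.symm), ← filter_or]
      congr 1
      refine filter_congr fun x _ => ?_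
      split_ifs with hx <;> simp [hx]
    · simp only [Function.update_of_ne hyu, Function.update_of_ne hyv, h.weight_eq]
      congr 1
      refine filter_congr fun x _ => ?_
      split_ifs with hx <;> simp [hx, Ne.symm hyu, Ne.symm hyv]
  · by_cases hx : o x = u
    · rw [if_pos hx, hw'v]
      obtain ⟨p, hp⟩ := h.exists_walk_of_eq hx
      have := add_comm (w u) (w v) ▸ Nat.clog_two_lt_clog_two_add hu huv
      exact ⟨.cons hadj.symm p, by rw [SimpleGraph.Walk.length_cons]; omega⟩
    rw [if_neg hx]
    rcases eq_or_ne (o x) v with hxv | hxv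
    · rw [hxv, hw'v]
      obtain ⟨p, hp⟩ := h.exists_walk_of_eq hxv
      exact ⟨p, hp.trans (Nat.clog_mono_right 2 (Nat.le_add_right _ _))⟩
    · rw [Function.update_of_ne hx, Function.update_of_ne hxv]
      exact h.exists_walk x

theorem of_acqReach {w : V → ℕ} (h : AcqReach G (fun _ => 1) w) : ∃ o, AcqOwners G w o := by
  induction h with
  | refl => exact ⟨id, one_id⟩
  | tail _ hm ih =>
    obtain ⟨o, ho⟩ := ih
    exact ho.exists_of_acqMove hm

end AcqOwners

theorem exists_acqReach_totalAcq_eq {V : Type*} [Fintype V] [DecidableEq V]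
    (G : SimpleGraph V) :
    ∃ w, AcqReach G (fun _ => 1) w ∧ totalAcq G = {v | 0 < w v}.ncard := by
  obtain ⟨w, hw, hmax⟩ := exists_acqReach_acqMaximal G (fun _ => 1)
  obtain ⟨w', hw', -, hm⟩ := Nat.sInf_mem (⟨_, w, hw, hmax, rfl⟩ : {m | ∃ w,
    AcqReach G (fun _ => 1) w ∧ AcqMaximal G w ∧ m = {v | 0 < w v}.ncard}.Nonempty)
  exact ⟨w', hw', hm⟩

theorem AcqReach.le_of_small_balls {V : Type*} [Fintype V] [DecidableEq V] {G : SimpleGraph V}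
    {D W : ℕ} (hDW : D ≤ W)
    (hball : ∀ v : V, {u : V | ∃ p : G.Walk v u, p.length ≤ Nat.clog 2 W + 1}.ncard ≤ D)
    {w : V → ℕ} (h : AcqReach G (fun _ => 1) w) (v : V) : w v ≤ W := by
  have key : ∀ w', AcqReach G (fun _ => 1) w' → ∀ x, Nat.clog 2 (w' x) ≤ Nat.clog 2 W + 1 →
      w' x ≤ W := fun w' hw' x hx => by
    obtain ⟨o, ho⟩ := AcqOwners.of_acqReach hw'
    exact ((ho.le_ncard_ball hx).trans (hball x)).trans hDW
  induction h generalizing v with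
  | refl => exact key _ .refl v (by simp)
  | tail hr hm ih =>
    exact key _ (hr.tail hm) v
      (Nat.clog_two_le_clog_two_succ_of_le_two_mul (hm.le_two_mul ih v))

theorem sum_le_mul_ncard_pos {V : Type*} [Fintype V] {w : V → ℕ} {W : ℕ} (hw : ∀ v, w v ≤ W) :
    ∑ v, w v ≤ W * {v | 0 < w v}.ncard := by
  classical
  rw [← sum_filter_ne_zero, Set.ncard_eq_toFinset_card', Set.toFinset_ofPred, mul_comm]
  simpa [Nat.pos_iff_ne_zero] using sum_le_card_nsmul _ _ W fun v _ => hw v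

/-- If every vertex of `G` has at most `D` vertices (including itself) within
graph distance `⌈log₂ W⌉ + 1`, where `W ≥ D`, then every acquisition protocol
leaves a residual set in which every vertex holds weight at most `W`;
consequently `a_t(G) ≥ n / W`, where `n` is the number of vertices. -/
theorem totalAcq_ge_of_small_balls {V : Type*} [Fintype V] [DecidableEq V]
    (G : SimpleGraph V) (D W : ℕ) (hDW : D ≤ W)
    (hball : ∀ v : V,
      {u : V | ∃ p : G.Walk v u, p.length ≤ Nat.clog 2 W + 1}.ncard ≤ D) :
    (∀ w : V → ℕ, AcqReach G (fun _ => 1) w → AcqMaximal G w →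
      ∀ v, w v ≤ W) ∧
    (Fintype.card V : ℝ) / W ≤ totalAcq G := by
  refine ⟨fun w hw _ => hw.le_of_small_balls hDW hball, ?_⟩
  obtain ⟨w, hw, hm⟩ := exists_acqReach_totalAcq_eq G
  rw [hm]
  rcases W.eq_zero_or_pos with rfl | hW
  · simp
  rw [div_le_iff₀ (by exact_mod_cast hW), mul_comm]
  obtain ⟨o, ho⟩ := AcqOwners.of_acqReach hw
  exact_mod_cast ho.sum_eq_card ▸ sum_le_mul_ncard_pos (hw.le_of_small_balls hDW hball)
end
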